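/- arXiv:2009.09966 — 3 statements merged into one kernel-verified Lean document; each statement's English description precedes it below -/
import Mathlib

section
/- Let Θ, Σ, φ be real numbers with Σ = 0 (the shear-free case), (1/√2)((2/3)Θ − Σ + φ) = 0 (the marginally trapped condition Θ_k = 0), and φ > 0. Then Θ = −(3/2)φ < 0. In particular, since a dynamical horizon requires Θ > 0, a shear-free LRS II spacetime admits no dynamical horizon: any marginally trapped tube there has Θ < 0. -/
/-- the shear-free case admits no dynamical horizon. -/
theorem stmt_1 (Θ σ φ : ℝ) (hσ : σ = 0)
    (hmts : (1 / Real.sqrt 2) * ((2/3) * Θ - σ + φ) = 0)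
    (hφ : φ > 0) :
    Θ = -(3/2) * φ ∧ Θ < 0 := by
  have h2 : Real.sqrt 2 ≠ 0 := by positivity
  have h : (2/3) * Θ - σ + φ = 0 := by
    rcases mul_eq_zero.mp hmts with h | h
    · exact absurd h (by simp [h2])
    · exact h
  subst hσ
  constructor <;> nlinarith
end

section
/- Let Θ, Σ, φ, Q, A, K, dotφ, dotK be real numbers satisfying: A = 0; the evolution equation dotφ = ((2/3)Θ − Σ)(A − (1/2)φ) + Q; the evolution equation dotK = −((2/3)Θ − Σ)·K; the relation K = (3/8)φ²; and the chain rule dotK = (3/4)φ·dotφ. Then φ·Q = 0. If moreover K > 0, then φ ≠ 0 and hence Q = 0 (the horizon neither absorbs nor emits radiation). -/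
/-- at the Ricci-flow time with `A = 0` and `K = (3/8)φ²`, the heat flux vanishes. -/
theorem stmt_10 (Θ σ φ Q A K dotφ dotK : ℝ)
    (hA : A = 0)
    (hdotφ : dotφ = ((2/3) * Θ - σ) * (A - (1/2) * φ) + Q)
    (hdotK : dotK = -((2/3) * Θ - σ) * K)
    (hK : K = (3/8) * φ^2)
    (hchain : dotK = (3/4) * φ * dotφ) :
    φ * Q = 0 ∧ (K > 0 → φ ≠ 0 ∧ Q = 0) := by
  subst hA hdotφ hK
  have hφQ : φ * Q = 0 := by nlinarith [hdotK, hchain]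
  refine ⟨hφQ, fun hKpos => ?_⟩
  have hφ : φ ≠ 0 := by
    intro h
    rw [h] at hKpos
    norm_num at hKpos
  exact ⟨hφ, by
    rcases mul_eq_zero.mp hφQ with h | h
    · exact absurd h hφ
    · exact h⟩
end

section
/- Let φ, K be real numbers with φ ≠ 0, suppose hatφ = −(3/4)φ² (the compactness condition for c = 0), and set α = −(hatφ + (1/2)φ²) and β = −((1/2)(hatφ + φ²) − K), so that α = (1/4)φ² and β = K − (1/8)φ². Assume R := α + 2β > 0 and Hamilton's pinching estimate α² + 2β² ≤ R² holds. Then β ≥ 0, hence K ≥ (1/8)φ² and R ≥ (1/4)φ². -/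
/-- Hamilton's pinching estimate gives the lower bounds `K ≥ φ²/8`, `R ≥ φ²/4`. -/
theorem stmt_11 (φ hatφ K α β R : ℝ) (hφ : φ ≠ 0)
    (hhatφ : hatφ = -(3/4) * φ^2)
    (hα : α = -(hatφ + (1/2) * φ^2))
    (hβ : β = -((1/2) * (hatφ + φ^2) - K))
    (hR : R = α + 2*β) (hRpos : R > 0)
    (hpinch : α^2 + 2*β^2 ≤ R^2) :
    α = (1/4) * φ^2 ∧ β = K - (1/8) * φ^2 ∧
    β ≥ 0 ∧ K ≥ (1/8) * φ^2 ∧ R ≥ (1/4) * φ^2 := by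
  have hφ2 : φ^2 > 0 := by positivity
  subst hhatφ hα hβ hR
  have hβ0 : -((1/2) * (-(3/4) * φ^2 + φ^2) - K) ≥ 0 := by nlinarith [sq_nonneg φ]
  refine ⟨by ring, by ring, hβ0, by nlinarith, by nlinarith⟩
end
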